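/- arXiv:2105.01825 — 3 statements merged into one kernel-verified Lean document; each statement's English description precedes it below -/
import Mathlib

section
/- Let M be a matroid on a finite ground set E of size n with rank function rk and rank r = rk(E), with r ≥ 1. If every cocircuit of M has at least r + 1 elements, then T(M;0,2) ≥ 2^(n−1), i.e. ∑_{S ⊆ E} (-1)^{r - rk(S)} ≥ 2^(n−1). -/
/-!
Passing to complements and to the dual matroid, the sum becomes
`T(M✶;2,0) = ∑_T (-1)^(|T| - rk✶ T)`, where `M✶` has nullity `r` and, by the cocircuit
hypothesis, every set of at most `r` elements is independent in `M✶`.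

Deletion–contraction shows that for a rank function of nullity `d` in which every set of at most
`k + 1` elements is independent, `T(·;2,0) / 2^|E|` is at least the probability that `d + k` fair
coin flips show at most `k` tails; the uniform matroid `U_{k+1,d+k+1}` attains this value. For
`d = r` and `k = r - 1` that probability is `1/2` by symmetry.
-/

/-- The rank of a set `X` in a matroid `M`: the largest cardinality of an
independent subset of `X`. -/
noncomputable def matroidRk {α : Type*} (M : Matroid α) (X : Set α) : ℕ :=
  sSup {n : ℕ | ∃ I, M.Indep I ∧ I ⊆ X ∧ I.ncard = n}

/-- An isthmus (coloop) of `M`: an element contained in every basis of `M`. -/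
def IsIsthmus {α : Type*} (M : Matroid α) (e : α) : Prop := ∀ B, M.IsBase B → e ∈ B

/-- A loop of `M`: an element contained in no basis of `M`. -/
def IsLoopElem {α : Type*} (M : Matroid α) (e : α) : Prop := ∀ B, M.IsBase B → e ∉ B

/-- A circuit of `M`: a minimal dependent set. -/
def IsCircuit {α : Type*} (M : Matroid α) (C : Set α) : Prop :=
  M.Dep C ∧ ∀ D, D ⊂ C → M.Indep D

/-- A cocircuit of `M`: a circuit of the dual matroid `M✶`. -/
def IsCocircuit {α : Type*} (M : Matroid α) (C : Set α) : Prop := IsCircuit M✶ C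

open Finset

theorem sum_range_choose_succ (m t : ℕ) :
    ∑ j ∈ range (t + 1), (m + 1).choose j =
      ∑ j ∈ range (t + 1), m.choose j + ∑ j ∈ range t, m.choose j := by
  rw [sum_range_succ', sum_range_succ' (fun j => m.choose j)]
  simp only [Nat.choose_succ_succ', sum_add_distrib, Nat.choose_zero_right]
  ring

def binomTail (d k : ℕ) : ℚ := (∑ j ∈ range (k + 1), ((d + k).choose j : ℚ)) / 2 ^ (d + k)

theorem binomTail_zero_left (k : ℕ) : binomTail 0 k = 1 := by
  rw [binomTail, zero_add, ← Nat.cast_sum, Nat.sum_range_choose]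
  simp

theorem binomTail_succ_zero (d : ℕ) : binomTail (d + 1) 0 = binomTail d 0 / 2 := by
  simp only [binomTail, zero_add, add_zero, range_one, sum_singleton, Nat.choose_zero_right, pow_succ]
  ring

theorem binomTail_succ_succ (d k : ℕ) :
    binomTail (d + 1) (k + 1) = (binomTail d (k + 1) + binomTail (d + 1) k) / 2 := by
  have hpascal := sum_range_choose_succ (d + k + 1) (k + 1)
  simp only [binomTail, ← Nat.cast_sum, show d + 1 + (k + 1) = d + k + 1 + 1 by ring,
    show d + (k + 1) = d + k + 1 by ring, show d + 1 + k = d + k + 1 by ring, hpascal,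
    Nat.cast_add, pow_succ]
  ring

theorem binomTail_succ_self (r : ℕ) : binomTail (r + 1) r = 1 / 2 := by
  rw [binomTail, show r + 1 + r = 2 * r + 1 by ring, ← Nat.cast_sum,
    Nat.sum_range_choose_halfway, pow_succ, pow_mul]
  field_simp
  norm_num

section RankFunction

variable {α : Type*} [DecidableEq α]

/-- Deletion and contraction are done on rank functions on `Finset α` rather than on matroids,
so that contracting an element does not change the ground type. -/
structure IsRankFn (rk : Finset α → ℕ) : Prop where
  empty : rk ∅ = 0
  mono : ∀ ⦃S T⦄, S ⊆ T → rk S ≤ rk T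
  insert_le : ∀ S a, rk (insert a S) ≤ rk S + 1
  submod : ∀ S T, rk (S ∪ T) + rk (S ∩ T) ≤ rk S + rk T

def contractRk (rk : Finset α → ℕ) (e : α) (S : Finset α) : ℕ := rk (insert e S) - 1

def signedNullitySum (rk : Finset α → ℕ) (E : Finset α) : ℤ :=
  ∑ S ∈ E.powerset, (-1) ^ (#S - rk S)

theorem contractRk_eq_card {rk : Finset α → ℕ} {a : α} {E : Finset α} {k : ℕ} (haE : a ∉ E)
    (hindep : ∀ S ⊆ insert a E, #S ≤ k + 2 → rk S = #S) :
    ∀ S ⊆ E, #S ≤ k + 1 → contractRk rk a S = #S := by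
  intro S hS hSk
  have haS : a ∉ S := fun haS => haE (hS haS)
  have := hindep (insert a S) (insert_subset_insert a hS)
    (by rw [card_insert_of_notMem haS]; omega)
  rw [card_insert_of_notMem haS] at this
  simp [contractRk, this]

namespace IsRankFn

variable {rk : Finset α → ℕ}

theorem union_le_add_card (h : IsRankFn rk) (S A : Finset α) : rk (S ∪ A) ≤ rk S + #A := by
  induction A using Finset.induction_on with
  | empty => simp
  | insert a A ha ih =>
    rw [union_insert, card_insert_of_notMem ha]
    linarith [h.insert_le (S ∪ A) a]

theorem le_card (h : IsRankFn rk) (S : Finset α) : rk S ≤ #S := by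
  simpa [h.empty] using h.union_le_add_card ∅ S

theorem singleton_le_one (h : IsRankFn rk) (a : α) : rk {a} ≤ 1 :=
  (h.le_card {a}).trans_eq (card_singleton a)

theorem one_le_insert (h : IsRankFn rk) {e : α} (he : rk {e} = 1) (S : Finset α) :
    1 ≤ rk (insert e S) :=
  he ▸ h.mono (singleton_subset_iff.2 (mem_insert_self e S))

theorem insert_eq_of_loop (h : IsRankFn rk) {a : α} (ha : rk {a} = 0) (S : Finset α) :
    rk (insert a S) = rk S := by
  have := h.submod S {a}
  rw [union_singleton, ha] at this
  have := h.mono (subset_insert a S)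
  omega

theorem contractRk (h : IsRankFn rk) {e : α} (he : rk {e} = 1) :
    IsRankFn (contractRk rk e) where
  empty := by simp [_root_.contractRk, he]
  mono S T hST := Nat.sub_le_sub_right (h.mono (insert_subset_insert e hST)) 1
  insert_le S a := by
    have := h.insert_le (insert e S) a
    rw [insert_comm] at this
    simp only [_root_.contractRk]
    omega
  submod S T := by
    have := h.submod (insert e S) (insert e T)
    rw [← insert_union_distrib, ← insert_inter_distrib] at this
    have := h.one_le_insert he (S ∪ T)
    have := h.one_le_insert he (S ∩ T)
    simp only [_root_.contractRk]
    omega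

theorem contractRk_eq_of_coloop (h : IsRankFn rk) {e : α} {E : Finset α} (heE : e ∉ E)
    (hcoloop : rk E < rk (insert e E)) {S : Finset α} (hS : S ⊆ E) :
    _root_.contractRk rk e S = rk S := by
  have hsub := h.submod (insert e S) E
  rw [insert_union, union_eq_right.2 hS, insert_inter_of_notMem heE,
    inter_eq_left.2 hS] at hsub
  have := h.insert_le S e
  have := h.mono (subset_insert e S)
  simp only [_root_.contractRk]
  omega

theorem signedNullitySum_insert_of_loop (h : IsRankFn rk) {a : α} {E : Finset α} (haE : a ∉ E)
    (ha : rk {a} = 0) : signedNullitySum rk (insert a E) = 0 := by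
  rw [signedNullitySum, sum_powerset_insert haE, ← sub_neg_eq_add, sub_eq_zero,
    ← sum_neg_distrib]
  refine sum_congr rfl fun S hS => ?_
  have haS : a ∉ S := fun haS => haE (mem_powerset.1 hS haS)
  have := h.le_card S
  rw [card_insert_of_notMem haS, h.insert_eq_of_loop ha,
    show #S + 1 - rk S = #S - rk S + 1 by omega, pow_succ, mul_neg_one, neg_neg]

theorem signedNullitySum_insert (h : IsRankFn rk) {a : α} {E : Finset α} (haE : a ∉ E)
    (ha : rk {a} = 1) :
    signedNullitySum rk (insert a E) =
      signedNullitySum rk E + signedNullitySum (_root_.contractRk rk a) E := by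
  rw [signedNullitySum, sum_powerset_insert haE]
  congr 1
  refine sum_congr rfl fun S hS => ?_
  have haS : a ∉ S := fun haS => haE (mem_powerset.1 hS haS)
  have := h.one_le_insert ha S
  have := h.le_card (insert a S)
  rw [card_insert_of_notMem haS] at this ⊢
  congr 1
  simp only [_root_.contractRk]
  omega

theorem signedNullitySum_nonneg (h : IsRankFn rk) (E : Finset α) :
    0 ≤ signedNullitySum rk E := by
  induction E using Finset.induction_on generalizing rk with
  | empty => simp [signedNullitySum]
  | insert a E haE ih =>
    rcases Nat.le_one_iff_eq_zero_or_eq_one.1 (h.singleton_le_one a) with ha | ha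
    · rw [h.signedNullitySum_insert_of_loop haE ha]
    · rw [h.signedNullitySum_insert haE ha]
      exact add_nonneg (ih h) (ih (h.contractRk ha))

theorem two_pow_card_mul_binomTail_le (h : IsRankFn rk) {E : Finset α} {k : ℕ}
    (hindep : ∀ S ⊆ E, #S ≤ k + 1 → rk S = #S) :
    2 ^ #E * binomTail (#E - rk E) k ≤ signedNullitySum rk E := by
  induction E using Finset.induction_on generalizing rk k with
  | empty => simp [signedNullitySum, h.empty, binomTail_zero_left]
  | insert a E haE ih =>
    have ha : rk {a} = 1 := by
      simpa using hindep {a} (singleton_subset_iff.2 (mem_insert_self a E)) (by simp)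
    have hindepE : ∀ S ⊆ E, #S ≤ k + 1 → rk S = #S := fun S hS =>
      hindep S (hS.trans (subset_insert a E))
    have hE := h.le_card E
    have hins := h.insert_le E a
    rw [h.signedNullitySum_insert haE ha, card_insert_of_notMem haE, Int.cast_add, pow_succ]
    by_cases hcoloop : rk E < rk (insert a E)
    · have hcontract : signedNullitySum (_root_.contractRk rk a) E = signedNullitySum rk E :=
        sum_congr rfl fun S hS => by
          rw [h.contractRk_eq_of_coloop haE hcoloop (mem_powerset.1 hS)]
      rw [hcontract, show #E + 1 - rk (insert a E) = #E - rk E by omega]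
      linarith [ih h hindepE]
    · have hrk : rk (insert a E) = rk E := by linarith [h.mono (subset_insert a E)]
      have hrkE : 1 ≤ rk E := hrk ▸ h.one_le_insert ha E
      rw [show #E + 1 - rk (insert a E) = #E - rk E + 1 by omega]
      cases k with
      | zero =>
        have : (0 : ℚ) ≤ signedNullitySum (_root_.contractRk rk a) E := by
          exact_mod_cast (h.contractRk ha).signedNullitySum_nonneg E
        rw [binomTail_succ_zero]
        linarith [ih h hindepE]
      | succ k =>
        have := ih (h.contractRk ha) (contractRk_eq_card haE hindep)
        rw [show #E - _root_.contractRk rk a E = #E - rk E + 1 by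
          simp only [_root_.contractRk]; omega] at this
        rw [binomTail_succ_succ]
        linarith [ih h hindepE]

end IsRankFn

end RankFunction

section Matroid

variable {α : Type*} {M : Matroid α}

theorem isCocircuit_iff_isCircuit_dual {C : Set α} : IsCocircuit M C ↔ M✶.IsCircuit C :=
  M✶.isCircuit_iff_forall_ssubset.symm

theorem cast_matroidRk [M.RankFinite] (X : Set α) : (matroidRk M X : ℕ∞) = M.eRk X := by
  obtain ⟨I, hI⟩ := M.exists_isBasis' X
  have hIfin : I.Finite := hI.indep.finite
  rw [← hI.encard_eq_eRk, ← hIfin.cast_ncard_eq, Nat.cast_inj]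
  refine IsGreatest.csSup_eq ⟨⟨I, hI.indep, hI.subset, rfl⟩, ?_⟩
  rintro _ ⟨J, hJ, hJX, rfl⟩
  have := hJ.encard_le_eRk_of_subset hJX
  rwa [← hI.encard_eq_eRk, ← hIfin.cast_ncard_eq, ← hJ.finite.cast_ncard_eq, Nat.cast_le] at this

theorem isRankFn_matroidRk [DecidableEq α] [M.RankFinite] :
    IsRankFn fun S : Finset α => matroidRk M S where
  empty := by exact_mod_cast (cast_matroidRk (M := M) ∅).trans M.eRk_empty
  mono S T hST := by
    have := M.eRk_mono (coe_subset.2 hST)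
    rwa [← cast_matroidRk, ← cast_matroidRk, Nat.cast_le] at this
  insert_le S a := by
    have := M.eRk_insert_le_add_one a S
    rw [← cast_matroidRk, ← cast_matroidRk, ← coe_insert] at this
    exact_mod_cast this
  submod S T := by
    have := M.eRk_inter_add_eRk_union_le S T
    rw [← cast_matroidRk, ← cast_matroidRk, ← cast_matroidRk, ← cast_matroidRk, ← coe_inter,
      ← coe_union, add_comm] at this
    exact_mod_cast this

theorem matroidRk_dual_add_matroidRk_ground [Finite α] (hE : M.E = Set.univ) (X : Set α) :
    matroidRk M✶ X + matroidRk M M.E = matroidRk M Xᶜ + X.ncard := by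
  have := M.eRk_dual_add_eRank X (hE ▸ Set.subset_univ X)
  rw [← M.eRk_ground, hE, ← Set.compl_eq_univ_sdiff, ← X.toFinite.cast_ncard_eq,
    ← cast_matroidRk, ← cast_matroidRk, ← cast_matroidRk] at this
  rw [hE]
  exact_mod_cast this

theorem matroidRk_dual_eq_card [Finite α] (hE : M.E = Set.univ) {k : ℕ}
    (hcc : ∀ C : Set α, IsCocircuit M C → k + 1 ≤ C.ncard) {S : Finset α} (hS : #S ≤ k) :
    matroidRk M✶ S = #S := by
  have hindep : M✶.Indep S := by
    by_contra hdep
    obtain ⟨C, hCS, hC⟩ := Matroid.Dep.exists_isCircuit_subset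
      ⟨hdep, by rw [Matroid.dual_ground, hE]; exact Set.subset_univ _⟩
    have := hcc C (isCocircuit_iff_isCircuit_dual.2 hC)
    have := Set.ncard_le_ncard hCS S.finite_toSet
    rw [Set.ncard_coe_finset] at this
    omega
  have := cast_matroidRk (M := M✶) S
  rwa [hindep.eRk_eq_encard, Set.encard_coe_eq_coe_finsetCard, Nat.cast_inj] at this

theorem card_sub_matroidRk_dual_univ [Fintype α] (hE : M.E = Set.univ) :
    Fintype.card α - matroidRk M✶ Set.univ = matroidRk M M.E := by
  classical
  have := matroidRk_dual_add_matroidRk_ground hE Set.univ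
  have h0 : matroidRk M ∅ = 0 := by simpa using (isRankFn_matroidRk (M := M)).empty
  rw [Set.compl_univ, h0, Set.ncard_univ, Nat.card_eq_fintype_card] at this
  omega

theorem sum_neg_one_pow_eq_signedNullitySum_dual [Fintype α] [DecidableEq α]
    (hE : M.E = Set.univ) :
    ∑ S : Finset α, (-1 : ℤ) ^ (matroidRk M M.E - matroidRk M S) =
      signedNullitySum (fun S : Finset α => matroidRk M✶ S) univ := by
  rw [signedNullitySum, powerset_univ]
  refine Fintype.sum_bijective compl compl_involutive.bijective _ _ fun S => ?_
  have := matroidRk_dual_add_matroidRk_ground hE ↑(Sᶜ)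
  rw [Set.ncard_coe_finset, coe_compl, compl_compl] at this
  rw [coe_compl]
  congr 1
  omega

end Matroid

/-- If every cocircuit of a rank-`r` matroid `M` (with `r ≥ 1`) on a finite ground set of
size `n` has at least `r + 1` elements, then `T(M;0,2) ≥ 2^(n-1)`. -/
theorem cocircuit_T02_ge {α : Type*} [Fintype α] (M : Matroid α)
    (hE : M.E = Set.univ)
    (hr : 1 ≤ matroidRk M M.E)
    (hcc : ∀ C : Set α, IsCocircuit M C → matroidRk M M.E + 1 ≤ C.ncard) :
    (2 : ℤ) ^ (Fintype.card α - 1) ≤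
      ∑ S : Finset α, (-1 : ℤ) ^ (matroidRk M M.E - matroidRk M (S : Set α)) := by
  classical
  obtain ⟨s, hs⟩ : ∃ s, matroidRk M M.E = s + 1 := ⟨_, (Nat.sub_add_cancel hr).symm⟩
  have hcorank := card_sub_matroidRk_dual_univ hE
  have hn : 1 ≤ Fintype.card α := by omega
  have hbound := isRankFn_matroidRk.two_pow_card_mul_binomTail_le (E := (univ : Finset α))
    (k := s) fun S _ hS => matroidRk_dual_eq_card hE hcc (hs ▸ hS)
  rw [card_univ, coe_univ, hcorank, hs, binomTail_succ_self, ← Nat.sub_add_cancel hn,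
    pow_succ] at hbound
  rw [sum_neg_one_pow_eq_signedNullitySum_dual hE]
  have : ((2 ^ (Fintype.card α - 1) : ℤ) : ℚ) ≤
      signedNullitySum (fun S : Finset α => matroidRk M✶ S) univ := by
    push_cast
    linarith
  exact_mod_cast this
end

section
/- Let M be a matroid on a finite ground set E of size n with rank r ≥ 1. If every cocircuit of M has at least r + 1 elements, then n ≥ 2r. -/
lemma isCocircuit_iff_isCocircuit {α : Type*} {M : Matroid α} {C : Set α} :
    IsCocircuit M C ↔ M.IsCocircuit C :=
  Matroid.isCircuit_iff_forall_ssubset.symm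

lemma matroidRk_ground_eq_ncard {α : Type*} {M : Matroid α} [M.RankFinite] {B : Set α}
    (hB : M.IsBase B) : matroidRk M M.E = B.ncard := by
  refine IsGreatest.csSup_eq ⟨⟨B, hB.indep, hB.subset_ground, rfl⟩, ?_⟩
  rintro _ ⟨I, hI, -, rfl⟩
  obtain ⟨B', hB', hIB'⟩ := hI.exists_isBase_superset
  exact (Set.ncard_le_ncard hIB' hB'.finite).trans (hB'.ncard_eq_ncard_of_isBase hB).le

namespace Matroid

variable {α : Type*} {M : Matroid α} [M.Finite]

lemma ncard_fundCocircuit_le (e : α) (B : Set α) :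
    (M.fundCocircuit e B).ncard ≤ (M.E \ B).ncard + 1 :=
  (Set.ncard_le_ncard (M.fundCocircuit_subset_insert_compl e B)
    (M.ground_finite.sdiff.insert e)).trans (Set.ncard_insert_le e _)

/-- For `e ∈ B`, the fundamental cocircuit of `e` has more than `|B|` elements, all but `e`
outside `B`, so `|B| ≤ |E \ B|`. -/
lemma IsBase.two_mul_ncard_le_of_ncard_lt_isCocircuit {B : Set α} (hB : M.IsBase B)
    (hcc : ∀ C, M.IsCocircuit C → B.ncard < C.ncard) : 2 * B.ncard ≤ M.E.ncard := by
  obtain rfl | ⟨e, he⟩ := B.eq_empty_or_nonempty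
  · simp
  have hfund_lt := hcc _ (fundCocircuit_isCocircuit he hB)
  have hsplit := Set.ncard_sdiff_add_ncard_of_subset hB.subset_ground M.ground_finite
  have hfund_le := M.ncard_fundCocircuit_le e B
  omega

end Matroid

theorem cocircuit_card_ge_two_rk_general {α : Type*} [Fintype α] (M : Matroid α)
    (hcc : ∀ C : Set α, IsCocircuit M C → matroidRk M M.E + 1 ≤ C.ncard) :
    2 * matroidRk M M.E ≤ Fintype.card α := by
  obtain ⟨B, hB⟩ := M.exists_isBase
  rw [matroidRk_ground_eq_ncard hB] at hcc ⊢
  calc 2 * B.ncard ≤ M.E.ncard :=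
        hB.two_mul_ncard_le_of_ncard_lt_isCocircuit fun C hC ↦
          hcc C (isCocircuit_iff_isCocircuit.2 hC)
    _ ≤ Fintype.card α := by
        simpa only [Nat.card_eq_fintype_card] using Set.ncard_le_card M.E

/-- If every cocircuit of a rank-`r` matroid `M` (with `r ≥ 1`) on a finite ground set of
size `n` has at least `r + 1` elements, then `n ≥ 2r`. -/
theorem cocircuit_card_ge_two_rk {α : Type*} [Fintype α] (M : Matroid α)
    (hE : M.E = Set.univ)
    (hr : 1 ≤ matroidRk M M.E)
    (hcc : ∀ C : Set α, IsCocircuit M C → matroidRk M M.E + 1 ≤ C.ncard) :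
    2 * matroidRk M M.E ≤ Fintype.card α :=
  cocircuit_card_ge_two_rk_general M hcc
end

section
/- Let M be a matroid on a finite ground set E of size n with rank function rk and rank r = rk(E). If M has no isthmuses, then T(M;0,2) ≥ 2^(n−r), i.e. ∑_{S ⊆ E} (-1)^{r - rk(S)} ≥ 2^(n−r). -/
/-!
Deletion–contraction at `(x, y) = (0, 2)`: if `e` is neither a loop nor an isthmus then
`T(M;0,2) = T(M\e;0,2) + T(M/e;0,2)`; if `M` has an isthmus `e` then `T(M;0,2) = 0`, since the
subsets with and without `e` cancel in pairs; and if `r = 0` every term is `1`, so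
`T(M;0,2) = 2^n`. By induction `T(M;0,2) ≥ 0` for every matroid. If `M` has no isthmus and
`r > 0`, contract a nonloop `e`: `M/e` is again isthmus-free with the same nullity `n - r`, so
`T(M;0,2) ≥ 0 + 2^(n-r)`.

The induction runs over rank functions on finsets, where deletion is restriction and contraction
of `e` is `S ↦ r(S ∪ {e}) - 1`.
-/

open Finset

section RankFunction

variable {α : Type*}

def tutteZeroTwo (r : Finset α → ℕ) (E : Finset α) : ℤ :=
  ∑ S ∈ E.powerset, (-1) ^ (r E - r S)

theorem tutteZeroTwo_eq_two_pow_of_rank_eq_zero {r : Finset α → ℕ} {E : Finset α}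
    (h : r E = 0) : tutteZeroTwo r E = 2 ^ E.card := by
  simp [tutteZeroTwo, h]

variable [DecidableEq α]

structure IsMatroidRank (r : Finset α → ℕ) : Prop where
  empty : r ∅ = 0
  mono : Monotone r
  insert_le : ∀ S e, r (insert e S) ≤ r S + 1
  submod : ∀ S T, r (S ∪ T) + r (S ∩ T) ≤ r S + r T

def contractRank (r : Finset α → ℕ) (e : α) (S : Finset α) : ℕ :=
  r (insert e S) - 1

theorem Finset.sum_powerset_eq_sum_erase {β : Type*} [AddCommMonoid β] {E : Finset α} {e : α}
    (he : e ∈ E) (f : Finset α → β) :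
    ∑ S ∈ E.powerset, f S = ∑ S ∈ (E.erase e).powerset, (f S + f (insert e S)) := by
  rw [sum_add_distrib, ← sum_powerset_insert (notMem_erase e E), insert_erase he]

namespace IsMatroidRank

variable {r : Finset α → ℕ} (hr : IsMatroidRank r)
include hr

theorem eq_zero_of_forall_singleton {E : Finset α} (h : ∀ e ∈ E, r {e} = 0) : r E = 0 := by
  induction E using Finset.induction_on with
  | empty => exact hr.empty
  | insert a E _ ih =>
    have := hr.submod {a} E
    rw [h a (mem_insert_self a E), ih (fun e he => h e (mem_insert_of_mem he)),
      ← insert_eq] at this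
    omega

theorem exists_singleton_pos {E : Finset α} (h : r E ≠ 0) : ∃ e ∈ E, 0 < r {e} := by
  by_contra! h'
  exact h (hr.eq_zero_of_forall_singleton fun e he => Nat.le_zero.1 (h' e he))

theorem insert_eq_add_one_of_coloop {E S : Finset α} {e : α} (he : e ∈ E)
    (hcol : r (E.erase e) < r E) (hS : S ⊆ E.erase e) : r (insert e S) = r S + 1 := by
  have h := hr.submod (insert e S) (E.erase e)
  rw [insert_union, union_eq_right.2 hS, insert_erase he,
    insert_inter_of_notMem (notMem_erase e E), inter_eq_left.2 hS] at h
  have := hr.insert_le S e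
  omega

theorem one_le_insert_of_singleton_pos {e : α} (he : 0 < r {e}) (S : Finset α) :
    1 ≤ r (insert e S) :=
  he.trans_le (hr.mono (singleton_subset_iff.2 (mem_insert_self e S)))

theorem contract {e : α} (he : 0 < r {e}) : IsMatroidRank (contractRank r e) := by
  have h1 := hr.one_le_insert_of_singleton_pos he
  refine ⟨?_, fun S T hST => ?_, fun S f => ?_, fun S T => ?_⟩
  · simp only [contractRank, insert_empty]
    have := hr.insert_le ∅ e
    rw [hr.empty, insert_empty] at this
    omega
  · have := hr.mono (insert_subset_insert e hST)
    simp only [contractRank]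
    omega
  · have := hr.insert_le (insert e S) f
    rw [insert_comm] at this
    have := h1 S
    simp only [contractRank]
    omega
  · have := hr.submod (insert e S) (insert e T)
    rw [← insert_union_distrib, ← insert_inter_distrib] at this
    have := h1 S; have := h1 T; have := h1 (S ∪ T); have := h1 (S ∩ T)
    simp only [contractRank]
    omega

theorem tutteZeroTwo_eq_zero_of_coloop {E : Finset α} {e : α} (he : e ∈ E) (hcol : r (E.erase e) < r E) :
    tutteZeroTwo r E = 0 := by
  rw [tutteZeroTwo, sum_powerset_eq_sum_erase he]
  refine sum_eq_zero fun S hS => ?_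
  have hSe := hr.insert_eq_add_one_of_coloop he hcol (mem_powerset.1 hS)
  have hle : r (insert e S) ≤ r E :=
    hr.mono (insert_erase he ▸ insert_subset_insert e (mem_powerset.1 hS))
  rw [show r E - r S = r E - r (insert e S) + 1 by omega, pow_succ]
  ring

theorem tutteZeroTwo_eq_delete_add_contract {E : Finset α} {e : α} (he : e ∈ E) (hnonloop : 0 < r {e})
    (hcol : r (E.erase e) = r E) :
    tutteZeroTwo r E =
      tutteZeroTwo r (E.erase e) + tutteZeroTwo (contractRank r e) (E.erase e) := by
  have h1 := hr.one_le_insert_of_singleton_pos hnonloop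
  have hE : r (insert e (E.erase e)) = r E := by rw [insert_erase he]
  rw [tutteZeroTwo, sum_powerset_eq_sum_erase he, sum_add_distrib, tutteZeroTwo, tutteZeroTwo,
    hcol]
  congr 1
  refine sum_congr rfl fun S _ => ?_
  have := h1 S
  simp only [contractRank]
  congr 1
  omega

theorem tutteZeroTwo_nonneg (E : Finset α) : 0 ≤ tutteZeroTwo r E := by
  induction E using Finset.strongInduction generalizing r with
  | H E ih =>
    by_cases hcol : ∃ e ∈ E, r (E.erase e) < r E
    · obtain ⟨e, he, hlt⟩ := hcol
      exact (hr.tutteZeroTwo_eq_zero_of_coloop he hlt).ge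
    push Not at hcol
    by_cases hrank : r E = 0
    · rw [tutteZeroTwo_eq_two_pow_of_rank_eq_zero hrank]
      positivity
    obtain ⟨e, he, hnonloop⟩ := hr.exists_singleton_pos hrank
    rw [hr.tutteZeroTwo_eq_delete_add_contract he hnonloop
      ((hr.mono (erase_subset e E)).antisymm (hcol e he))]
    exact add_nonneg (ih _ (erase_ssubset he) hr) (ih _ (erase_ssubset he) (hr.contract hnonloop))

theorem two_pow_le_tutteZeroTwo {E : Finset α} (hcol : ∀ e ∈ E, r (E.erase e) = r E) :
    2 ^ (E.card - r E) ≤ tutteZeroTwo r E := by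
  induction E using Finset.strongInduction generalizing r with
  | H E ih =>
    by_cases hrank : r E = 0
    · rw [tutteZeroTwo_eq_two_pow_of_rank_eq_zero hrank, hrank, Nat.sub_zero]
    obtain ⟨e, he, hnonloop⟩ := hr.exists_singleton_pos hrank
    have hE : r (insert e (E.erase e)) = r E := by rw [insert_erase he]
    have hcol' : ∀ x ∈ E.erase e,
        contractRank r e ((E.erase e).erase x) = contractRank r e (E.erase e) := by
      intro x hx
      have hxE : insert e ((E.erase e).erase x) = E.erase x := by
        rw [erase_right_comm, insert_erase (mem_erase.2 ⟨(ne_of_mem_erase hx).symm, he⟩)]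
      simp only [contractRank]
      rw [hxE, insert_erase he, hcol x (mem_of_mem_erase hx)]
    have hnullity : (E.erase e).card - contractRank r e (E.erase e) = E.card - r E := by
      have := card_erase_of_mem he
      have := card_pos.2 ⟨e, he⟩
      simp only [contractRank]
      omega
    rw [hr.tutteZeroTwo_eq_delete_add_contract he hnonloop (hcol e he)]
    have := ih _ (erase_ssubset he) (hr.contract hnonloop) hcol'
    rw [hnullity] at this
    linarith [hr.tutteZeroTwo_nonneg (E.erase e)]

end IsMatroidRank

end RankFunction

section MatroidRk

variable {α : Type*} [Finite α]

theorem matroidRk_cast_eq_eRk (M : Matroid α) (X : Set α) : (matroidRk M X : ℕ∞) = M.eRk X := by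
  obtain ⟨I, hI⟩ := M.exists_isBasis' X
  have hmax : matroidRk M X = I.ncard := by
    refine IsGreatest.csSup_eq ⟨⟨I, hI.indep, hI.subset, rfl⟩, ?_⟩
    rintro _ ⟨J, hJ, hJX, rfl⟩
    rw [← Nat.cast_le (α := ℕ∞), Set.coe_ncard_eq_encard, Set.coe_ncard_eq_encard,
      ← hI.eRk_eq_encard]
    exact hJ.encard_le_eRk_of_subset hJX
  rw [hmax, Set.coe_ncard_eq_encard, hI.eRk_eq_encard]

theorem isMatroidRank_matroidRk [DecidableEq α] (M : Matroid α) :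
    IsMatroidRank (fun S : Finset α => matroidRk M S) := by
  refine ⟨?_, fun S T hST => ?_, fun S e => ?_, fun S T => ?_⟩ <;>
    simp only [← Nat.cast_le (α := ℕ∞), ← Nat.cast_inj (R := ℕ∞), Nat.cast_add, Nat.cast_one,
      Nat.cast_zero, matroidRk_cast_eq_eRk, coe_insert, coe_union, coe_inter, coe_empty]
  · exact M.eRk_empty
  · exact M.eRk_mono (coe_subset.2 hST)
  · exact M.eRk_insert_le_add_one e S
  · rw [add_comm (M.eRk _)]
    exact M.eRk_inter_add_eRk_union_le S T

theorem matroidRk_univ_diff_singleton_of_not_isIsthmus {M : Matroid α} {e : α}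
    (he : ¬ IsIsthmus M e) : matroidRk M (Set.univ \ {e}) = matroidRk M Set.univ := by
  obtain ⟨B, hB, heB⟩ : ∃ B, M.IsBase B ∧ e ∉ B := by simpa [IsIsthmus] using he
  rw [← Nat.cast_inj (R := ℕ∞), matroidRk_cast_eq_eRk, matroidRk_cast_eq_eRk]
  refine (M.eRk_mono Set.sdiff_subset).antisymm ?_
  calc M.eRk Set.univ = M.eRk B := by rw [M.eRk_univ_eq, hB.eRk_eq_eRank]
    _ ≤ M.eRk (Set.univ \ {e}) := M.eRk_mono (Set.subset_sdiff_singleton (Set.subset_univ B) heB)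

end MatroidRk

theorem isthmusFree_T02_ge_general {α : Type*} [Fintype α] (M : Matroid α)
    (hIsth : ∀ e : α, ¬ IsIsthmus M e) :
    (2 : ℤ) ^ (Fintype.card α - matroidRk M M.E) ≤
      ∑ S : Finset α, (-1 : ℤ) ^ (matroidRk M M.E - matroidRk M (S : Set α)) := by
  classical
  have hground : matroidRk M M.E = matroidRk M (univ : Finset α) := by
    rw [← Nat.cast_inj (R := ℕ∞), matroidRk_cast_eq_eRk, matroidRk_cast_eq_eRk, coe_univ,
      M.eRk_ground, M.eRk_univ_eq]
  have hcol : ∀ e ∈ (univ : Finset α),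
      matroidRk M ((univ.erase e : Finset α) : Set α) = matroidRk M (univ : Finset α) :=
    fun e _ => by
      rw [coe_erase, coe_univ]
      exact matroidRk_univ_diff_singleton_of_not_isIsthmus (hIsth e)
  have := (isMatroidRank_matroidRk M).two_pow_le_tutteZeroTwo hcol
  rwa [tutteZeroTwo, powerset_univ, ← hground, card_univ] at this

/-- If a rank-`r` matroid `M` on a finite ground set of size `n` has no isthmuses, then
`T(M;0,2) ≥ 2^(n-r)`. -/
theorem isthmusFree_T02_ge {α : Type*} [Fintype α] (M : Matroid α)
    (hE : M.E = Set.univ)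
    (hIsth : ∀ e : α, ¬ IsIsthmus M e) :
    (2 : ℤ) ^ (Fintype.card α - matroidRk M M.E) ≤
      ∑ S : Finset α, (-1 : ℤ) ^ (matroidRk M M.E - matroidRk M (S : Set α)) :=
  isthmusFree_T02_ge_general M hIsth
end
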